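/- arXiv:1603.03986 — 5 statements merged into one kernel-verified Lean document; each statement's English description precedes it below -/
import Mathlib

section
/- Let x and t be real numbers with 1 - 2tx + t² > 0 and x ≠ t. Then 3·F(t,x)⁵ = F^{(1)}(t,x)/(x-t)³ + F^{(2)}(t,x)/(x-t)². -/
/-! Writing `Q(s) = 1 - 2sx + s²` and `F = Q^(-1/2)`, the relation `Q' = -2(x - s)` turns into the
equation `F' = (x - s) F³`. Differentiating it once more gives `F'' = -F³ + 3(x - s)² F⁵`, and in
`F'/(x - t)³ + F''/(x - t)²` the two `F³` terms cancel, leaving `3F⁵`. -/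

open Filter Topology

theorem iteratedDeriv_two_eq_of_eventually_hasDerivAt {𝕜 E : Type*} [NontriviallyNormedField 𝕜]
    [NormedAddCommGroup E] [NormedSpace 𝕜 E] {f g : 𝕜 → E} {t : 𝕜} {g' : E}
    (hf : ∀ᶠ s in 𝓝 t, HasDerivAt f (g s) s) (hg : HasDerivAt g g' t) :
    iteratedDeriv 2 f t = g' := by
  have hderiv : deriv f =ᶠ[𝓝 t] g := hf.mono fun _ hs => hs.deriv
  rw [iteratedDeriv_succ, iteratedDeriv_one, hderiv.deriv_eq]
  exact hg.deriv

noncomputable def legendreGenFun (x t : ℝ) : ℝ := (1 - 2 * t * x + t ^ 2) ^ (-(1 : ℝ) / 2)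

section

variable {x t : ℝ}

theorem hasDerivAt_legendreGenFun (ht : 0 < 1 - 2 * t * x + t ^ 2) :
    HasDerivAt (legendreGenFun x) ((x - t) * legendreGenFun x t ^ 3) t := by
  have hQ : HasDerivAt (fun s : ℝ => 1 - 2 * s * x + s ^ 2) (2 * t - 2 * x) t := by
    refine ((((hasDerivAt_id' t).const_mul 2).mul_const x).const_sub 1 |>.add
      (hasDerivAt_pow 2 t)).congr_deriv ?_
    push_cast
    ring
  refine (hQ.rpow_const (p := -(1 : ℝ) / 2) (Or.inl ht.ne')).congr_deriv ?_
  rw [legendreGenFun, ← Real.rpow_mul_natCast ht.le]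
  norm_num
  ring

theorem hasDerivAt_sub_mul_legendreGenFun_pow_three (ht : 0 < 1 - 2 * t * x + t ^ 2) :
    HasDerivAt (fun s => (x - s) * legendreGenFun x s ^ 3)
      (-legendreGenFun x t ^ 3 + 3 * (x - t) ^ 2 * legendreGenFun x t ^ 5) t := by
  refine (((hasDerivAt_id' t).const_sub x).mul
    ((hasDerivAt_legendreGenFun ht).pow 3)).congr_deriv ?_
  simp only [Pi.pow_apply, Nat.cast_ofNat]
  ring

theorem iteratedDeriv_two_legendreGenFun (ht : 0 < 1 - 2 * t * x + t ^ 2) :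
    iteratedDeriv 2 (legendreGenFun x) t
      = -legendreGenFun x t ^ 3 + 3 * (x - t) ^ 2 * legendreGenFun x t ^ 5 := by
  have hpos : ∀ᶠ s in 𝓝 t, 0 < 1 - 2 * s * x + s ^ 2 :=
    (by fun_prop : Continuous fun s : ℝ => 1 - 2 * s * x + s ^ 2).continuousAt.eventually
      (lt_mem_nhds ht)
  exact iteratedDeriv_two_eq_of_eventually_hasDerivAt (hpos.mono fun _ => hasDerivAt_legendreGenFun)
    (hasDerivAt_sub_mul_legendreGenFun_pow_three ht)

end

/-- For real `x` and `t` with `1 - 2tx + t² > 0` and `x ≠ t`, the function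
`F(t,x) = (1 - 2tx + t²)^(-1/2)` satisfies
`3·F⁵ = F⁽¹⁾/(x-t)³ + F⁽²⁾/(x-t)²`. -/
theorem legendre_genFun_pow_five (x t : ℝ) (h : 1 - 2 * t * x + t ^ 2 > 0) (hxt : x ≠ t) :
    3 * ((1 - 2 * t * x + t ^ 2) ^ (-(1 : ℝ) / 2)) ^ 5
      = iteratedDeriv 1 (fun s : ℝ => (1 - 2 * s * x + s ^ 2) ^ (-(1 : ℝ) / 2)) t / (x - t) ^ 3
        + iteratedDeriv 2 (fun s : ℝ => (1 - 2 * s * x + s ^ 2) ^ (-(1 : ℝ) / 2)) t / (x - t) ^ 2 := by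
  change 3 * legendreGenFun x t ^ 5
    = iteratedDeriv 1 (legendreGenFun x) t / (x - t) ^ 3
      + iteratedDeriv 2 (legendreGenFun x) t / (x - t) ^ 2
  rw [iteratedDeriv_one, (hasDerivAt_legendreGenFun h).deriv, iteratedDeriv_two_legendreGenFun h]
  have hsub : x - t ≠ 0 := sub_ne_zero.mpr hxt
  field_simp
  ring
end

section
/- Let x and t be real numbers with 1 - 2tx + t² > 0 and x ≠ t. Then 3·F(t,x)²·F^{(1)}(t,x) = F^{(1)}(t,x)/(x-t)² + F^{(2)}(t,x)/(x-t). -/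
/-!
Writing `u = 1 - 2tx + t²`, the function `F = u^(-1/2)` solves the first-order equation
`F' = (x - t) F³`. Differentiating it once more gives `F'' = -F³ + 3 (x - t)² F⁵`, and substituting
both into the right-hand side, the `F³/(x - t)` terms cancel and `3 (x - t) F⁵ = 3 F² F'` remains.
-/

open Filter Topology

section CubicODE

variable {f : ℝ → ℝ} {x t : ℝ}

theorem iteratedDeriv_two_of_hasDerivAt_sub_mul_cube
    (hf : ∀ᶠ s in 𝓝 t, HasDerivAt f ((x - s) * f s ^ 3) s) :
    iteratedDeriv 2 f t = -f t ^ 3 + 3 * (x - t) ^ 2 * f t ^ 5 := by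
  have hderiv : deriv f =ᶠ[𝓝 t] fun s => (x - s) * f s ^ 3 := hf.mono fun s hs => hs.deriv
  have hft : HasDerivAt f ((x - t) * f t ^ 3) t := hf.self_of_nhds
  have hsecond : HasDerivAt (fun s => (x - s) * f s ^ 3)
      (-1 * f t ^ 3 + (x - t) * (3 * f t ^ 2 * ((x - t) * f t ^ 3))) t := by
    simpa using ((hasDerivAt_id t).const_sub x).fun_mul (hft.fun_pow 3)
  rw [iteratedDeriv_succ, iteratedDeriv_one, hderiv.deriv_eq, hsecond.deriv]
  ring

theorem sq_mul_deriv_eq_of_hasDerivAt_sub_mul_cube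
    (hf : ∀ᶠ s in 𝓝 t, HasDerivAt f ((x - s) * f s ^ 3) s) (hxt : x ≠ t) :
    3 * f t ^ 2 * iteratedDeriv 1 f t
      = iteratedDeriv 1 f t / (x - t) ^ 2 + iteratedDeriv 2 f t / (x - t) := by
  have hxt' : x - t ≠ 0 := sub_ne_zero.mpr hxt
  rw [iteratedDeriv_one, hf.self_of_nhds.deriv, iteratedDeriv_two_of_hasDerivAt_sub_mul_cube hf]
  field_simp
  ring

end CubicODE

theorem hasDerivAt_legendre_genFun {x s : ℝ} (hs : 0 < 1 - 2 * s * x + s ^ 2) :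
    HasDerivAt (fun s : ℝ => (1 - 2 * s * x + s ^ 2) ^ (-(1 : ℝ) / 2))
      ((x - s) * ((1 - 2 * s * x + s ^ 2) ^ (-(1 : ℝ) / 2)) ^ 3) s := by
  have hu := ((hasDerivAt_id' s).const_mul 2 |>.mul_const x |>.const_sub 1).fun_add
    (hasDerivAt_pow 2 s)
  convert hu.rpow_const (p := -(1 : ℝ) / 2) (Or.inl hs.ne') using 1
  rw [← Real.rpow_mul_natCast hs.le]
  norm_num
  ring

/-- For real `x` and `t` with `1 - 2tx + t² > 0` and `x ≠ t`, the function
`F(t,x) = (1 - 2tx + t²)^(-1/2)` satisfies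
`3·F²·F⁽¹⁾ = F⁽¹⁾/(x-t)² + F⁽²⁾/(x-t)`. -/
theorem legendre_genFun_sq_mul_deriv (x t : ℝ) (h : 1 - 2 * t * x + t ^ 2 > 0) (hxt : x ≠ t) :
    3 * ((1 - 2 * t * x + t ^ 2) ^ (-(1 : ℝ) / 2)) ^ 2
        * iteratedDeriv 1 (fun s : ℝ => (1 - 2 * s * x + s ^ 2) ^ (-(1 : ℝ) / 2)) t
      = iteratedDeriv 1 (fun s : ℝ => (1 - 2 * s * x + s ^ 2) ^ (-(1 : ℝ) / 2)) t / (x - t) ^ 2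
        + iteratedDeriv 2 (fun s : ℝ => (1 - 2 * s * x + s ^ 2) ^ (-(1 : ℝ) / 2)) t / (x - t) := by
  have hcont : Continuous fun s : ℝ => 1 - 2 * s * x + s ^ 2 := by fun_prop
  have hpos : ∀ᶠ s in 𝓝 t, 0 < 1 - 2 * s * x + s ^ 2 :=
    continuousAt_const.eventually_lt hcont.continuousAt h
  exact sq_mul_deriv_eq_of_hasDerivAt_sub_mul_cube
    (hpos.mono fun _ hs => hasDerivAt_legendre_genFun hs) hxt
end

section
/- Let x and t be real numbers with 1 - 2tx + t² > 0 and x ≠ t. Then 105·F(t,x)⁹ = 15·F^{(1)}(t,x)/(x-t)⁷ + 15·F^{(2)}(t,x)/(x-t)⁶ + 6·F^{(3)}(t,x)/(x-t)⁵ + F^{(4)}(t,x)/(x-t)⁴. -/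
/-!
With `y = t - x` and `c = 1 - x²` we have `F = (y² + c)^(-1/2)`, and the operator `L = y⁻¹ d/dy`
sends `(y² + c)^(-(2k-1)/2)` to `-(2k-1) (y² + c)^(-(2k+1)/2)`, so `L⁴ F = 105 F⁹`. Expanding
`L⁴ = y⁻⁴ D⁴ - 6 y⁻⁵ D³ + 15 y⁻⁶ D² - 15 y⁻⁷ D` gives the identity.

Directly: since `F' = (x - t) F³`, every derivative of `F` is a polynomial in `x - t` and `F`,
and with the first four written out the identity becomes a polynomial one.
-/

open Filter Topology

theorem Filter.EventuallyEq.iteratedDeriv_succ_of_hasDerivAt {𝕜 E : Type*}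
    [NontriviallyNormedField 𝕜] [NormedAddCommGroup E] [NormedSpace 𝕜 E] {f g g' : 𝕜 → E}
    {n : ℕ} {t : 𝕜} (h : iteratedDeriv n f =ᶠ[𝓝 t] g)
    (hg : ∀ᶠ s in 𝓝 t, HasDerivAt g (g' s) s) :
    iteratedDeriv (n + 1) f =ᶠ[𝓝 t] g' := by
  rw [iteratedDeriv_succ]
  filter_upwards [h.deriv, hg] with s hs hgs
  rw [hs, hgs.deriv]

section

variable {x s : ℝ}

local notation "F" => legendreGenFun x

theorem legendreGenFun_pow_three (hs : 0 < 1 - 2 * s * x + s ^ 2) :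
    F s ^ 3 = (1 - 2 * s * x + s ^ 2) ^ (-(1 : ℝ) / 2 - 1) := by
  rw [legendreGenFun, ← Real.rpow_natCast, ← Real.rpow_mul hs.le]
  norm_num

theorem hasDerivAt_legendreGenFun_s5 (hs : 0 < 1 - 2 * s * x + s ^ 2) :
    HasDerivAt F ((x - s) * F s ^ 3) s := by
  have hu : HasDerivAt (fun s : ℝ => 1 - 2 * s * x + s ^ 2) (2 * s - 2 * x) s :=
    ((((hasDerivAt_id' s).const_mul 2).mul_const x).const_sub 1 |>.add
      (hasDerivAt_pow 2 s)).congr_deriv (by ring)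
  rw [legendreGenFun_pow_three hs]
  exact (hu.rpow_const (Or.inl hs.ne')).congr_deriv (by ring)

theorem hasDerivAt_sub_pow_mul_legendreGenFun_pow (k m : ℕ) (hs : 0 < 1 - 2 * s * x + s ^ 2) :
    HasDerivAt (fun s => (x - s) ^ k * F s ^ m)
      (-(k * (x - s) ^ (k - 1) * F s ^ m) + m * (x - s) ^ (k + 1) * F s ^ (m + 2)) s := by
  refine ((((hasDerivAt_id' s).const_sub x).pow k).mul
    ((hasDerivAt_legendreGenFun_s5 hs).pow m)).congr_deriv ?_
  rcases m with _ | m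
  · simp
  · simp only [mul_neg, mul_one, Pi.pow_apply, neg_mul, Nat.cast_add, Nat.cast_one,
      add_tsub_cancel_right]
    ring

/- The functions differentiated below are the closed forms of `F'`, `F''` and `F'''`. -/

theorem hasDerivAt_legendreGenFun_deriv₁ (hs : 0 < 1 - 2 * s * x + s ^ 2) :
    HasDerivAt (fun s => (x - s) * F s ^ 3) (-F s ^ 3 + 3 * (x - s) ^ 2 * F s ^ 5) s :=
  ((hasDerivAt_sub_pow_mul_legendreGenFun_pow 1 3 hs).congr_deriv (by norm_num))
    |>.congr_of_eventuallyEq (.of_eq (funext fun s => by ring))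

theorem hasDerivAt_legendreGenFun_deriv₂ (hs : 0 < 1 - 2 * s * x + s ^ 2) :
    HasDerivAt (fun s => -F s ^ 3 + 3 * (x - s) ^ 2 * F s ^ 5)
      (-9 * (x - s) * F s ^ 5 + 15 * (x - s) ^ 3 * F s ^ 7) s :=
  (((hasDerivAt_sub_pow_mul_legendreGenFun_pow 0 3 hs).neg.add
    ((hasDerivAt_sub_pow_mul_legendreGenFun_pow 2 5 hs).const_mul 3)).congr_deriv
      (by norm_num; ring))
    |>.congr_of_eventuallyEq
      (.of_eq (funext fun s => by simp only [Pi.add_apply, Pi.neg_apply]; ring))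

theorem hasDerivAt_legendreGenFun_deriv₃ (hs : 0 < 1 - 2 * s * x + s ^ 2) :
    HasDerivAt (fun s => -9 * (x - s) * F s ^ 5 + 15 * (x - s) ^ 3 * F s ^ 7)
      (9 * F s ^ 5 - 90 * (x - s) ^ 2 * F s ^ 7 + 105 * (x - s) ^ 4 * F s ^ 9) s :=
  ((((hasDerivAt_sub_pow_mul_legendreGenFun_pow 1 5 hs).const_mul (-9)).add
    ((hasDerivAt_sub_pow_mul_legendreGenFun_pow 3 7 hs).const_mul 15)).congr_deriv
      (by norm_num; ring))
    |>.congr_of_eventuallyEq (.of_eq (funext fun s => by simp only [Pi.add_apply]; ring))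

end

/-- For real `x` and `t` with `1 - 2tx + t² > 0` and `x ≠ t`, the function
`F(t,x) = (1 - 2tx + t²)^(-1/2)` satisfies
`105·F⁹ = 15·F⁽¹⁾/(x-t)⁷ + 15·F⁽²⁾/(x-t)⁶ + 6·F⁽³⁾/(x-t)⁵ + F⁽⁴⁾/(x-t)⁴`. -/
theorem legendre_genFun_pow_nine (x t : ℝ) (h : 1 - 2 * t * x + t ^ 2 > 0) (hxt : x ≠ t) :
    105 * ((1 - 2 * t * x + t ^ 2) ^ (-(1 : ℝ) / 2)) ^ 9
      = 15 * iteratedDeriv 1 (fun s : ℝ => (1 - 2 * s * x + s ^ 2) ^ (-(1 : ℝ) / 2)) t / (x - t) ^ 7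
        + 15 * iteratedDeriv 2 (fun s : ℝ => (1 - 2 * s * x + s ^ 2) ^ (-(1 : ℝ) / 2)) t / (x - t) ^ 6
        + 6 * iteratedDeriv 3 (fun s : ℝ => (1 - 2 * s * x + s ^ 2) ^ (-(1 : ℝ) / 2)) t / (x - t) ^ 5
        + iteratedDeriv 4 (fun s : ℝ => (1 - 2 * s * x + s ^ 2) ^ (-(1 : ℝ) / 2)) t / (x - t) ^ 4 := by
  set F := legendreGenFun x
  change 105 * F t ^ 9 = 15 * iteratedDeriv 1 F t / (x - t) ^ 7
    + 15 * iteratedDeriv 2 F t / (x - t) ^ 6 + 6 * iteratedDeriv 3 F t / (x - t) ^ 5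
    + iteratedDeriv 4 F t / (x - t) ^ 4
  have hpos : ∀ᶠ s in 𝓝 t, 0 < 1 - 2 * s * x + s ^ 2 :=
    (isOpen_lt continuous_const (by fun_prop)).mem_nhds h
  have d0 : iteratedDeriv 0 F =ᶠ[𝓝 t] F := .of_eq iteratedDeriv_zero
  have d1 := d0.iteratedDeriv_succ_of_hasDerivAt (hpos.mono fun _ => hasDerivAt_legendreGenFun_s5)
  have d2 := d1.iteratedDeriv_succ_of_hasDerivAt
    (hpos.mono fun _ => hasDerivAt_legendreGenFun_deriv₁)
  have d3 := d2.iteratedDeriv_succ_of_hasDerivAt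
    (hpos.mono fun _ => hasDerivAt_legendreGenFun_deriv₂)
  have d4 := d3.iteratedDeriv_succ_of_hasDerivAt
    (hpos.mono fun _ => hasDerivAt_legendreGenFun_deriv₃)
  rw [d1.eq_of_nhds, d2.eq_of_nhds, d3.eq_of_nhds, d4.eq_of_nhds]
  have hd : x - t ≠ 0 := sub_ne_zero.mpr hxt
  field_simp
  ring
end

section
/- (Theorem 1, recursive form.) For every integer N ≥ 1 and all real numbers x and t with 1 - 2tx + t² > 0 and x ≠ t, the function F(t,x) = (1 - 2tx + t²)^{-1/2} satisfies the non-linear differential equation (2N-1)!! · F(t,x)^{2N+1} = Σ_{i=1}^{N} a_i(N) · F^{(i)}(t,x)/(x-t)^{2N-i}. -/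
/-- The coefficients `a_i(N)` defined by `a_1(1) = 1`, `a_1(N+1) = (2N-1)·a_1(N)`,
`a_{N+1}(N+1) = a_N(N)`, and `a_i(N+1) = (2N-i)·a_i(N) + a_{i-1}(N)` for `2 ≤ i ≤ N`
(and `a_i(N) = 0` when `i = 0` or `i > N`). -/
def legA : ℕ → ℕ → ℤ
  | _, 0 => 0
  | i, 1 => if i = 1 then 1 else 0
  | i, (N + 2) => if i = 0 ∨ N + 2 < i then 0
      else (2 * (N + 1) - (i : ℤ)) * legA i (N + 1) + legA (i - 1) (N + 1)

lemma legA_zero : ∀ N : ℕ, legA 0 N = 0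
  | 0 => rfl
  | 1 => rfl
  | (N+2) => by rw [legA, if_pos (Or.inl rfl)]

lemma legA_gt : ∀ {i N : ℕ}, N < i → legA i N = 0
  | i, 0, _ => rfl
  | i, 1, h => by rw [legA, if_neg (by omega)]
  | i, (N+2), h => by rw [legA, if_pos (Or.inr h)]

lemma legA_succ {N i : ℕ} (hN : 1 ≤ N) (hi1 : 1 ≤ i) (hi2 : i ≤ N + 1) :
    legA i (N + 1) = (2 * (N:ℤ) - (i:ℤ)) * legA i N + legA (i-1) N := by
  cases N with
  | zero => omega
  | succ M =>
    show legA i (M + 2) = _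
    rw [legA, if_neg (by omega)]
    push_cast
    ring

noncomputable def legF (x : ℝ) : ℝ → ℝ := fun s => (1 - 2*s*x + s^2) ^ (-(1:ℝ)/2)

lemma isOpen_legU (x : ℝ) : IsOpen {s : ℝ | 0 < 1 - 2*s*x + s^2} :=
  isOpen_lt continuous_const (by fun_prop)

lemma hasDerivAt_Q (x t : ℝ) :
    HasDerivAt (fun s : ℝ => 1 - 2*s*x + s^2) (2*t - 2*x) t := by
  have h1 : HasDerivAt (fun s : ℝ => 2*s*x) (2*x) t := by
    simpa using ((hasDerivAt_id t).const_mul 2).mul_const x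
  have h2 : HasDerivAt (fun s : ℝ => s^2) (2*t) t := by
    simpa using hasDerivAt_pow 2 t
  have := ((hasDerivAt_const t (1:ℝ)).sub h1).add h2
  exact this.congr_deriv (by ring)

lemma hasDerivAt_legF (x t : ℝ) (h : 0 < 1 - 2*t*x + t^2) :
    HasDerivAt (legF x) ((x - t) * (legF x t)^3) t := by
  have h0 : (1 - 2*t*x + t^2) ≠ 0 := ne_of_gt h
  have hd := (hasDerivAt_Q x t).rpow_const (p := -(1:ℝ)/2) (Or.inl h0)
  convert hd using 1
  rfl
  have h3 : (legF x t)^(3:ℕ) = (1 - 2*t*x + t^2) ^ (-(1:ℝ)/2 - 1) := by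
    rw [legF, ← Real.rpow_natCast ((1 - 2*t*x + t^2) ^ (-(1:ℝ)/2)) 3,
      ← Real.rpow_mul h.le]
    norm_num
  rw [h3]; ring

lemma contDiffOn_iteratedDeriv_legF (x : ℝ) (i : ℕ) :
    ContDiffOn ℝ (⊤ : ℕ∞) (iteratedDeriv i (legF x)) {s : ℝ | 0 < 1 - 2*s*x + s^2} := by
  induction i with
  | zero =>
    simp only [iteratedDeriv_zero]
    intro s hs
    have hQ : ContDiffAt ℝ (⊤ : ℕ∞) (fun s : ℝ => 1 - 2*s*x + s^2) s := by fun_prop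
    exact (hQ.rpow_const_of_ne (ne_of_gt hs)).contDiffWithinAt
  | succ i ih =>
    rw [iteratedDeriv_succ]
    exact ih.deriv_of_isOpen (isOpen_legU x) (mod_cast le_top)

lemma hasDerivAt_iteratedDeriv_legF (x : ℝ) (i : ℕ) (t : ℝ) (h : 0 < 1 - 2*t*x + t^2) :
    HasDerivAt (iteratedDeriv i (legF x)) (iteratedDeriv (i+1) (legF x) t) t := by
  have h1 := (contDiffOn_iteratedDeriv_legF x i).differentiableOn (by simp)
  have h2 : DifferentiableAt ℝ (iteratedDeriv i (legF x)) t :=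
    h1.differentiableAt ((isOpen_legU x).mem_nhds h)
  rw [iteratedDeriv_succ]
  exact h2.hasDerivAt

lemma legKey (x : ℝ) (N : ℕ) (hN : 1 ≤ N) :
    ∀ t : ℝ, 0 < 1 - 2*t*x + t^2 → x ≠ t →
    (Nat.doubleFactorial (2*N-1) : ℝ) * (legF x t)^(2*N+1) * (x - t)^(2*N)
      = ∑ i ∈ Finset.Icc 1 N, (legA i N : ℝ) * iteratedDeriv i (legF x) t * (x - t)^i := by
  induction N, hN using Nat.le_induction with
  | base =>
    intro t h hxt
    have h1 : iteratedDeriv 1 (legF x) t = (x - t) * (legF x t)^3 := by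
      rw [iteratedDeriv_one]
      exact (hasDerivAt_legF x t h).deriv
    simp only [Finset.Icc_self, Finset.sum_singleton, h1]
    norm_num [legA, Nat.doubleFactorial]
    ring
  | succ N hN ih =>
    intro t h hxt
    have hu : x - t ≠ 0 := sub_ne_zero.mpr hxt
    have hUopen : IsOpen {s : ℝ | (0 < 1 - 2*s*x + s^2) ∧ x ≠ s} := by
      have he : {s : ℝ | (0 < 1 - 2*s*x + s^2) ∧ x ≠ s}
          = {s : ℝ | 0 < 1 - 2*s*x + s^2} ∩ {x}ᶜ := by
        ext s
        simp only [Set.mem_setOf_eq, Set.mem_inter_iff, Set.mem_compl_iff,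
          Set.mem_singleton_iff]
        constructor <;> rintro ⟨a, b⟩ <;> exact ⟨a, fun hc => b hc.symm⟩
      rw [he]
      exact (isOpen_legU x).inter isOpen_compl_singleton
    have hev : (fun s : ℝ => (Nat.doubleFactorial (2*N-1) : ℝ) * (legF x s)^(2*N+1) * (x - s)^(2*N))
        =ᶠ[nhds t] (fun s => ∑ i ∈ Finset.Icc 1 N,
            (legA i N : ℝ) * iteratedDeriv i (legF x) s * (x - s)^i) := by
      filter_upwards [hUopen.mem_nhds ⟨h, hxt⟩] with s hs
      exact ih s hs.1 hs.2
    have hL : HasDerivAt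
        (fun s : ℝ => (Nat.doubleFactorial (2*N-1) : ℝ) * (legF x s)^(2*N+1) * (x - s)^(2*N))
        ((Nat.doubleFactorial (2*N-1) : ℝ) * (↑(2*N+1) * (legF x t)^(2*N+1-1)
            * ((x - t) * (legF x t)^3)) * (x - t)^(2*N)
          + (Nat.doubleFactorial (2*N-1) : ℝ) * (legF x t)^(2*N+1)
            * (↑(2*N) * (x - t)^(2*N-1) * (0-1))) t :=
      (((hasDerivAt_legF x t h).pow _).const_mul _).mul
        (((hasDerivAt_const t x).sub (hasDerivAt_id t)).pow _)
    have hR : HasDerivAt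
        (fun s : ℝ => ∑ i ∈ Finset.Icc 1 N,
            (legA i N : ℝ) * iteratedDeriv i (legF x) s * (x - s)^i)
        (∑ i ∈ Finset.Icc 1 N, (((legA i N : ℝ) * iteratedDeriv (i+1) (legF x) t) * (x - t)^i
          + ((legA i N : ℝ) * iteratedDeriv i (legF x) t) * (↑i * (x - t)^(i-1) * (0-1)))) t :=
      HasDerivAt.fun_sum (fun i _ => (((hasDerivAt_iteratedDeriv_legF x i t h).const_mul _).mul
        (((hasDerivAt_const t x).sub (hasDerivAt_id t)).pow _)))
    have hEq := hL.unique (hR.congr_of_eventuallyEq hev)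
    -- rewrite the target sum using the recursion for legA
    have h1 : ∀ i ∈ Finset.Icc 1 (N+1),
        (legA i (N+1) : ℝ) * iteratedDeriv i (legF x) t * (x-t)^i
        = (2*(N:ℝ) - i) * (legA i N : ℝ) * iteratedDeriv i (legF x) t * (x-t)^i
          + (legA (i-1) N : ℝ) * iteratedDeriv i (legF x) t * (x-t)^i := by
      intro i hi
      obtain ⟨hi1, hi2⟩ := Finset.mem_Icc.mp hi
      rw [legA_succ hN hi1 hi2]
      push_cast
      ring
    have h2 : ∑ i ∈ Finset.Icc 1 (N+1), (legA (i-1) N : ℝ) * iteratedDeriv i (legF x) t * (x-t)^i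
        = ∑ j ∈ Finset.Icc 0 N, (legA j N : ℝ) * iteratedDeriv (j+1) (legF x) t * (x-t)^(j+1) := by
      refine Finset.sum_nbij' (fun i => i - 1) (fun j => j + 1) ?_ ?_ ?_ ?_ ?_
      · intro a ha; simp only [Finset.mem_Icc] at *; omega
      · intro a ha; simp only [Finset.mem_Icc] at *; omega
      · intro a ha; simp only [Finset.mem_Icc] at *; omega
      · intro a ha; simp only [Finset.mem_Icc] at *; omega
      · intro a ha
        obtain ⟨ha1, ha2⟩ := Finset.mem_Icc.mp ha
        obtain ⟨b, rfl⟩ : ∃ b, a = b + 1 := ⟨a - 1, by omega⟩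
        simp
    have h3 : Finset.Icc 0 N = insert 0 (Finset.Icc 1 N) := by
      ext j; simp only [Finset.mem_Icc, Finset.mem_insert]; omega
    have hsum : ∑ i ∈ Finset.Icc 1 (N+1), (legA i (N+1) : ℝ) * iteratedDeriv i (legF x) t * (x-t)^i
        = ∑ i ∈ Finset.Icc 1 N, ((2*(N:ℝ) - i) * (legA i N : ℝ) * iteratedDeriv i (legF x) t * (x-t)^i)
          + ∑ i ∈ Finset.Icc 1 N, ((legA i N : ℝ) * iteratedDeriv (i+1) (legF x) t * (x-t)^(i+1)) := by
      rw [Finset.sum_congr rfl h1, Finset.sum_add_distrib]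
      congr 1
      · rw [Finset.sum_Icc_succ_top (by omega), legA_gt (by omega)]
        simp
      · rw [h2, h3, Finset.sum_insert (by simp), legA_zero]
        simp
    rw [hsum, ← Finset.sum_add_distrib]
    have hterm : ∀ i ∈ Finset.Icc 1 N,
        ((2*(N:ℝ) - i) * (legA i N : ℝ) * iteratedDeriv i (legF x) t * (x-t)^i
          + (legA i N : ℝ) * iteratedDeriv (i+1) (legF x) t * (x-t)^(i+1))
        = (x - t) * (((legA i N : ℝ) * iteratedDeriv (i+1) (legF x) t) * (x - t)^i
            + ((legA i N : ℝ) * iteratedDeriv i (legF x) t) * (↑i * (x - t)^(i-1) * (0-1)))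
          + 2*(N:ℝ) * ((legA i N : ℝ) * iteratedDeriv i (legF x) t * (x-t)^i) := by
      intro i hi
      obtain ⟨hi1, _⟩ := Finset.mem_Icc.mp hi
      obtain ⟨b, rfl⟩ : ∃ b, i = b + 1 := ⟨i - 1, by omega⟩
      simp only [Nat.add_sub_cancel]
      push_cast
      ring
    rw [Finset.sum_congr rfl hterm, Finset.sum_add_distrib, ← Finset.mul_sum, ← Finset.mul_sum,
      ← hEq, ← ih t h hxt]
    obtain ⟨M, rfl⟩ : ∃ M, N = M + 1 := ⟨N - 1, by omega⟩
    have hd : (Nat.doubleFactorial (2*(M+1+1)-1) : ℝ)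
        = (2*(M:ℝ)+3) * (Nat.doubleFactorial (2*(M+1)-1) : ℝ) := by
      rw [show 2*(M+1+1)-1 = 2*M+1+2 from by omega, Nat.doubleFactorial]
      push_cast [show 2*(M+1)-1 = 2*M+1 from by omega]
      ring
    rw [hd]
    simp only [show 2*(M+1)+1-1 = 2*M+2 from by omega, show 2*(M+1)-1 = 2*M+1 from by omega,
      show 2*(M+1+1) = 2*M+4 from by omega, show 2*(M+1+1)+1 = 2*M+5 from by omega,
      show 2*(M+1)+1 = 2*M+3 from by omega, show 2*(M+1) = 2*M+2 from by omega]
    push_cast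
    ring


/-- Theorem 1 (recursive form): for every `N ≥ 1` and all real `x`, `t` with
`1 - 2tx + t² > 0` and `x ≠ t`, the function `F(t,x) = (1 - 2tx + t²)^(-1/2)` satisfies
`(2N-1)!! · F^(2N+1) = Σ_{i=1}^{N} a_i(N) · F⁽ⁱ⁾/(x-t)^(2N-i)`. -/
theorem legendre_genFun_nonlinear_ODE (N : ℕ) (hN : 1 ≤ N) (x t : ℝ)
    (h : 1 - 2 * t * x + t ^ 2 > 0) (hxt : x ≠ t) :
    (Nat.doubleFactorial (2 * N - 1) : ℝ) * ((1 - 2 * t * x + t ^ 2) ^ (-(1 : ℝ) / 2)) ^ (2 * N + 1)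
      = ∑ i ∈ Finset.Icc 1 N, (legA i N : ℝ)
          * iteratedDeriv i (fun s : ℝ => (1 - 2 * s * x + s ^ 2) ^ (-(1 : ℝ) / 2)) t
          / (x - t) ^ (2 * N - i) := by
  have hu : x - t ≠ 0 := sub_ne_zero.mpr hxt
  have key := legKey x N hN t h hxt
  show (Nat.doubleFactorial (2*N-1) : ℝ) * (legF x t)^(2*N+1)
      = ∑ i ∈ Finset.Icc 1 N, (legA i N : ℝ) * iteratedDeriv i (legF x) t / (x - t)^(2*N-i)
  have hstep : ∀ i ∈ Finset.Icc 1 N,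
      (legA i N : ℝ) * iteratedDeriv i (legF x) t / (x - t)^(2*N - i)
      = (legA i N : ℝ) * iteratedDeriv i (legF x) t * (x - t)^i / (x - t)^(2*N) := by
    intro i hi
    obtain ⟨hi1, hi2⟩ := Finset.mem_Icc.mp hi
    rw [div_eq_div_iff (pow_ne_zero _ hu) (pow_ne_zero _ hu),
      ← pow_sub_mul_pow (x - t) (show i ≤ 2*N by omega)]
    ring
  rw [Finset.sum_congr rfl hstep, ← Finset.sum_div, ← key, mul_div_assoc,
    div_self (pow_ne_zero _ hu), mul_one]
end

section
/- (Unfolding of the recursion, eq. (30).) For all integers N ≥ 2 and 2 ≤ i ≤ N, the coefficients satisfy a_i(N+1) = Π_{l=0}^{N-i} (2N - 2l - i) + Σ_{l=0}^{N-i} ⟨2N-i⟩_l · a_{i-1}(N-l). -/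
/-- `⟨m⟩_l = m(m-2)(m-4)···(m-2(l-1))`, with `⟨m⟩_0 = 1`. -/
def descDouble (m : ℤ) (l : ℕ) : ℤ := ∏ j ∈ Finset.range l, (m - 2 * j)

lemma descDouble_succ (m : ℤ) (l : ℕ) : descDouble m (l + 1) = descDouble m l * (m - 2 * l) :=
  Finset.prod_range_succ _ _

lemma legA_succ_s10 (i M : ℕ) (hM : 1 ≤ M) (hi : 1 ≤ i) (hiM : i ≤ M + 1) :
    legA i (M + 1) = (2 * M - (i : ℤ)) * legA i M + legA (i - 1) M := by
  obtain ⟨m, rfl⟩ : ∃ m, M = m + 1 := ⟨M - 1, by omega⟩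
  rw [legA, if_neg (by omega)]
  push_cast
  ring

lemma legA_eq_zero_of_lt {i N : ℕ} (h : N < i) : legA i N = 0 := by
  match N with
  | 0 => rfl
  | 1 => simp [legA, show i ≠ 1 by omega]
  | N + 2 => rw [legA, if_pos (by omega)]

lemma legA_self {n : ℕ} (hn : 1 ≤ n) : legA n n = 1 := by
  induction n, hn using Nat.le_induction with
  | base => simp [legA]
  | succ n hn ih =>
    rw [legA_succ_s10 _ _ hn (by omega) le_rfl, legA_eq_zero_of_lt (Nat.lt_succ_self n),
      Nat.add_sub_cancel, ih, mul_zero, zero_add]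

lemma legA_succ_eq_descDouble_mul_add_sum (i N k : ℕ) (hi : 1 ≤ i) (hk : i + k ≤ N + 1) :
    legA i (N + 1) = descDouble (2 * N - (i : ℤ)) k * legA i (N + 1 - k)
      + ∑ l ∈ Finset.range k, descDouble (2 * N - (i : ℤ)) l * legA (i - 1) (N - l) := by
  induction k with
  | zero => simp [descDouble]
  | succ k ih =>
    have hstep := legA_succ_s10 i (N - k) (by omega) hi (by omega)
    rw [ih (by omega), show N + 1 - k = N - k + 1 by omega, hstep,
      show N + 1 - (k + 1) = N - k by omega, descDouble_succ,
      Finset.sum_range_succ, Nat.cast_sub (by omega : k ≤ N)]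
    ring

theorem legA_unfold_general (N i : ℕ) (hi2 : 2 ≤ i) (hiN : i ≤ N) :
    legA i (N + 1)
      = ∏ l ∈ Finset.range (N - i + 1), ((2 * N : ℤ) - 2 * l - i)
        + ∑ l ∈ Finset.range (N - i + 1), descDouble ((2 * N : ℤ) - i) l * legA (i - 1) (N - l) := by
  have hprod : ∏ l ∈ Finset.range (N - i + 1), ((2 * N : ℤ) - 2 * l - i)
      = descDouble (2 * N - (i : ℤ)) (N - i + 1) :=
    Finset.prod_congr rfl fun l _ => by ring
  rw [legA_succ_eq_descDouble_mul_add_sum i N (N - i + 1) (by omega) (by omega),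
    show N + 1 - (N - i + 1) = i by omega, legA_self (by omega), mul_one, hprod]

/-- Unfolding of the recursion (eq. (30)): for `N ≥ 2` and `2 ≤ i ≤ N`,
`a_i(N+1) = Π_{l=0}^{N-i} (2N - 2l - i) + Σ_{l=0}^{N-i} ⟨2N-i⟩_l · a_{i-1}(N-l)`. -/
theorem legA_unfold (N i : ℕ) (hN : 2 ≤ N) (hi2 : 2 ≤ i) (hiN : i ≤ N) :
    legA i (N + 1)
      = ∏ l ∈ Finset.range (N - i + 1), ((2 * N : ℤ) - 2 * l - i)
        + ∑ l ∈ Finset.range (N - i + 1), descDouble ((2 * N : ℤ) - i) l * legA (i - 1) (N - l) :=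
  legA_unfold_general N i hi2 hiN
end
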